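/- Let ν, ν_Γ be unit vectors in ℝ^{n+1} and set A_γ = I - ν⊗ν, A_Γ = I - ν_Γ⊗ν_Γ. Then A_γ - A_γ A_Γ A_γ = w ⊗ w where w = ν_Γ - (ν_Γ·ν)ν, and consequently ‖A_γ - A_γ A_Γ A_γ‖_{ℓ₂→ℓ₂} ≤ |ν - ν_Γ|². -/

import Mathlib

open scoped RealInnerProductSpace

/-! The map `A_γ A_Γ A_γ` differs from `A_γ` by one rank-one term: since `A_γ` is a self-adjoint
idempotent, `A_γ A_Γ A_γ x = A_γ x - ⟪νΓ, A_γ x⟫ A_γ νΓ = A_γ x - ⟪w, x⟫ w` with `w = A_γ νΓ`.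
Its norm is then `‖w‖² = 1 - c²` with `c = ⟪ν, νΓ⟫`, which is at most `2 - 2c = ‖ν - νΓ‖²`
because `(1 - c)² ≥ 0`. -/

namespace InnerProductSpace

variable {E : Type*} [NormedAddCommGroup E] [InnerProductSpace ℝ E]

/-- `I - ν ⊗ ν`. -/
def projOrth (ν x : E) : E := x - ⟪ν, x⟫ • ν

lemma projOrth_apply (ν x : E) : projOrth ν x = x - ⟪ν, x⟫ • ν := rfl

lemma inner_projOrth_left (ν x y : E) : ⟪projOrth ν x, y⟫ = ⟪x, projOrth ν y⟫ := by
  simp only [projOrth, inner_sub_left, inner_sub_right, real_inner_smul_left,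
    real_inner_smul_right, real_inner_comm ν]
  ring

lemma inner_projOrth_self {ν : E} (hν : ‖ν‖ = 1) (x : E) : ⟪ν, projOrth ν x⟫ = 0 := by
  rw [projOrth, inner_sub_right, real_inner_smul_right, real_inner_self_eq_norm_sq, hν]
  ring

lemma projOrth_projOrth {ν : E} (hν : ‖ν‖ = 1) (x : E) :
    projOrth ν (projOrth ν x) = projOrth ν x := by
  rw [projOrth_apply ν (projOrth ν x), inner_projOrth_self hν, zero_smul, sub_zero]

lemma projOrth_sub_projOrth_projOrth_projOrth {ν : E} (hν : ‖ν‖ = 1) (μ x : E) :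
    projOrth ν x - projOrth ν (projOrth μ (projOrth ν x)) =
      ⟪projOrth ν μ, x⟫ • projOrth ν μ := by
  have hlin : projOrth ν (projOrth ν x - ⟪μ, projOrth ν x⟫ • μ) =
      projOrth ν (projOrth ν x) - ⟪μ, projOrth ν x⟫ • projOrth ν μ := by
    simp only [projOrth, inner_sub_right, real_inner_smul_right]
    module
  rw [projOrth_apply μ, hlin, projOrth_projOrth hν, inner_projOrth_left, sub_sub_cancel]

lemma norm_projOrth_sq {ν : E} (hν : ‖ν‖ = 1) (μ : E) :
    ‖projOrth ν μ‖ ^ 2 = ‖μ‖ ^ 2 - ⟪ν, μ⟫ ^ 2 := by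
  rw [← real_inner_self_eq_norm_sq, inner_projOrth_left, projOrth_projOrth hν, projOrth,
    inner_sub_right, real_inner_smul_right, real_inner_self_eq_norm_sq, real_inner_comm]
  ring

lemma norm_projOrth_sq_le_norm_sub_sq {ν μ : E} (hν : ‖ν‖ = 1) (hμ : ‖μ‖ = 1) :
    ‖projOrth ν μ‖ ^ 2 ≤ ‖ν - μ‖ ^ 2 := by
  rw [norm_projOrth_sq hν, norm_sub_sq_real, hν, hμ]
  nlinarith [sq_nonneg (⟪ν, μ⟫ - 1)]

end InnerProductSpace

open InnerProductSpace

lemma norm_inner_smul_self_le {E : Type*} [NormedAddCommGroup E] [InnerProductSpace ℝ E]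
    (w x : E) : ‖⟪w, x⟫ • w‖ ≤ ‖w‖ ^ 2 * ‖x‖ :=
  calc ‖⟪w, x⟫ • w‖ = |⟪w, x⟫| * ‖w‖ := by rw [norm_smul, Real.norm_eq_abs]
    _ ≤ ‖w‖ * ‖x‖ * ‖w‖ := by gcongr; exact abs_real_inner_le_norm w x
    _ = ‖w‖ ^ 2 * ‖x‖ := by ring

/-- For unit vectors `ν, νΓ`, with `Aγ = I - ν⊗ν` and `AΓ = I - νΓ⊗νΓ`:
`Aγ - Aγ AΓ Aγ = w ⊗ w` with `w = νΓ - (νΓ·ν)ν`, and consequently the operator norm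
of `Aγ - Aγ AΓ Aγ` is at most `‖ν - νΓ‖²`. -/
theorem stmt_6 (n : ℕ) (ν νΓ : EuclideanSpace ℝ (Fin (n + 1)))
    (hν : ‖ν‖ = 1) (hνΓ : ‖νΓ‖ = 1)
    (Aγ AΓ : EuclideanSpace ℝ (Fin (n + 1)) → EuclideanSpace ℝ (Fin (n + 1)))
    (hAγ : ∀ x, Aγ x = x - ⟪ν, x⟫ • ν)
    (hAΓ : ∀ x, AΓ x = x - ⟪νΓ, x⟫ • νΓ)
    (w : EuclideanSpace ℝ (Fin (n + 1))) (hw : w = νΓ - ⟪νΓ, ν⟫ • ν) :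
    (∀ x, Aγ x - Aγ (AΓ (Aγ x)) = ⟪w, x⟫ • w) ∧
      (∀ x, ‖Aγ x - Aγ (AΓ (Aγ x))‖ ≤ ‖ν - νΓ‖ ^ 2 * ‖x‖) := by
  obtain rfl : Aγ = projOrth ν := funext hAγ
  obtain rfl : AΓ = projOrth νΓ := funext hAΓ
  obtain rfl : w = projOrth ν νΓ := by rw [hw, projOrth_apply, real_inner_comm]
  have hrankOne := projOrth_sub_projOrth_projOrth_projOrth hν νΓ
  refine ⟨hrankOne, fun x => ?_⟩
  calc ‖projOrth ν x - projOrth ν (projOrth νΓ (projOrth ν x))‖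
      ≤ ‖projOrth ν νΓ‖ ^ 2 * ‖x‖ := hrankOne x ▸ norm_inner_smul_self_le _ x
    _ ≤ ‖ν - νΓ‖ ^ 2 * ‖x‖ :=
      mul_le_mul_of_nonneg_right (norm_projOrth_sq_le_norm_sub_sq hν hνΓ) (norm_nonneg x)
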